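/- arXiv:1601.02751 — 7 statements merged into one kernel-verified Lean document; each statement's English description precedes it below -/
import Mathlib

section
/- Let M be a prime Γ-ring, a ∈ Z(M) with a ≠ 0, and b ∈ M. If aαb ∈ Z(M) for all α ∈ Γ, then b ∈ Z(M). -/
structure GammaRing (M : Type*) (Γ : Type*) [AddCommGroup M] [AddCommGroup Γ] where
  tp : M → Γ → M → M
  add_left : ∀ (x y : M) (α : Γ) (z : M), tp (x + y) α z = tp x α z + tp y α z
  add_mid : ∀ (x : M) (α β : Γ) (z : M), tp x (α + β) z = tp x α z + tp x β z
  add_right : ∀ (x : M) (α : Γ) (y z : M), tp x α (y + z) = tp x α y + tp x α z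
  assoc : ∀ (x : M) (α : Γ) (y : M) (β : Γ) (z : M),
    tp (tp x α y) β z = tp x α (tp y β z)

namespace GammaRing

variable {M Γ : Type*} [AddCommGroup M] [AddCommGroup Γ] (G : GammaRing M Γ)

/-- The commutator `[x,y]_α = xαy - yαx`. -/
def comm (x : M) (α : Γ) (y : M) : M := G.tp x α y - G.tp y α x

/-- The centre `Z(M)`. -/
def center : Set M := {z | ∀ (α : Γ) (y : M), G.tp z α y = G.tp y α z}

/-- `M` is a prime Γ-ring. -/
def IsPrime : Prop :=
  ∀ a b : M, (∀ (x : M) (α β : Γ), G.tp (G.tp a α x) β b = 0) → a = 0 ∨ b = 0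

/-- Assumption (A): `xαyβz = xβyαz`. -/
def AssumptionA : Prop :=
  ∀ (x y z : M) (α β : Γ), G.tp (G.tp x α y) β z = G.tp (G.tp x β y) α z

/-- `D` is a derivation on `M`. -/
def IsDerivation (D : M → M) : Prop :=
  (∀ x y : M, D (x + y) = D x + D y) ∧
    ∀ (x : M) (α : Γ) (y : M), D (G.tp x α y) = G.tp (D x) α y + G.tp x α (D y)

/-- `f` is a generalized derivation with associated derivation `D`. -/
def IsGenDerivation (f D : M → M) : Prop :=
  (∀ x y : M, f (x + y) = f x + f y) ∧
    ∀ (x : M) (α : Γ) (y : M), f (G.tp x α y) = G.tp (f x) α y + G.tp x α (D y)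

/-- `J` is a left ideal. -/
def IsLeftIdeal (J : AddSubgroup M) : Prop :=
  ∀ (m : M) (α : Γ) (j : M), j ∈ J → G.tp m α j ∈ J

/-- `f` is commuting on `J`. -/
def CommutingOn (f : M → M) (J : AddSubgroup M) : Prop :=
  ∀ a ∈ J, ∀ α : Γ, G.comm (f a) α a = 0

/-- `f` is centralizing on `J`. -/
def CentralizingOn (f : M → M) (J : AddSubgroup M) : Prop :=
  ∀ a ∈ J, ∀ α : Γ, G.comm (f a) α a ∈ G.center

/-- `M` is a commutative Γ-ring. -/
def IsCommutative : Prop := ∀ (x : M) (α : Γ) (y : M), G.tp x α y = G.tp y α x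

end GammaRing

theorem stmt_3 {M Γ : Type*} [AddCommGroup M] [AddCommGroup Γ] (G : GammaRing M Γ)
    (hA : G.AssumptionA) (hP : G.IsPrime) (a b : M)
    (ha : a ∈ G.center) (ha0 : a ≠ 0) (hab : ∀ α : Γ, G.tp a α b ∈ G.center) :
    b ∈ G.center := by
  have tp0 : ∀ (x : M) (α : Γ), G.tp x α (0 : M) = 0 := by
    intro x α
    have := G.add_right x α 0 0
    simpa using this
  intro β y
  set c := G.tp b β y - G.tp y β b with hc
  have hac : ∀ α : Γ, G.tp a α c = 0 := by
    intro α
    have h1 : G.tp a α (G.tp b β y) = G.tp (G.tp a α b) β y := (G.assoc a α b β y).symm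
    have h2 : G.tp (G.tp a α b) β y = G.tp y β (G.tp a α b) := hab α β y
    have h3 : G.tp y β (G.tp a α b) = G.tp (G.tp y β a) α b := (G.assoc y β a α b).symm
    have h4 : G.tp y β a = G.tp a β y := (ha β y).symm
    have h5 : G.tp (G.tp a β y) α b = G.tp (G.tp a α y) β b := hA a y b β α
    have h6 : G.tp (G.tp a α y) β b = G.tp a α (G.tp y β b) := G.assoc a α y β b
    have key : G.tp a α (G.tp b β y) = G.tp a α (G.tp y β b) := by
      rw [h1, h2, h3, h4, h5, h6]
    have hsub : G.tp a α (G.tp b β y - G.tp y β b)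
        = G.tp a α (G.tp b β y) - G.tp a α (G.tp y β b) := by
      have := G.add_right a α (G.tp b β y - G.tp y β b) (G.tp y β b)
      simp only [sub_add_cancel] at this
      exact eq_sub_of_add_eq this.symm
    rw [hc, hsub, key, sub_self]
  have hzero : ∀ (x : M) (α γ : Γ), G.tp (G.tp a α x) γ c = 0 := by
    intro x α γ
    have h1 : G.tp a α x = G.tp x α a := ha α x
    rw [h1, G.assoc, hac, tp0]
  rcases hP a c hzero with h | h
  · exact absurd h ha0
  · have := sub_eq_zero.mp h
    exact this
end

section
/- Let M be a prime Γ-ring and J a nonzero left ideal of M. If D is a nonzero derivation on M, then D does not vanish identically on J. -/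
theorem stmt_4 {M Γ : Type*} [AddCommGroup M] [AddCommGroup Γ] (G : GammaRing M Γ)
    (hA : G.AssumptionA) (hP : G.IsPrime) (J : AddSubgroup M)
    (hJ : G.IsLeftIdeal J) (hJ0 : J ≠ ⊥) (D : M → M)
    (hD : G.IsDerivation D) (hD0 : ∃ x : M, D x ≠ 0) :
    ∃ j ∈ J, D j ≠ 0 := by
  by_contra h
  push_neg at h
  obtain ⟨j, hjJ, hj0⟩ : ∃ j ∈ J, j ≠ (0 : M) := by
    by_contra hc
    push_neg at hc
    exact hJ0 (AddSubgroup.ext fun x => ⟨fun hx => hc x hx, fun hx => by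
      simp only [AddSubgroup.mem_bot] at hx; simpa [hx] using J.zero_mem⟩)
  obtain ⟨x, hx⟩ := hD0
  -- D(m) α j = 0 for all m, α, since D(mαj) = D m α j + m α D j = D m α j = 0
  have key : ∀ (m : M) (α : Γ) (k : M), k ∈ J → G.tp (D m) α k = 0 := by
    intro m α k hk
    have h1 : D (G.tp m α k) = G.tp (D m) α k + G.tp m α (D k) := hD.2 m α k
    rw [h (G.tp m α k) (hJ m α k hk), h k hk] at h1
    have : G.tp m α (0 : M) = 0 := by
      have := G.add_right m α 0 0
      simp at this
      linear_combination (norm := abel) this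
    rw [this, add_zero] at h1
    exact h1.symm
  have hx0 : D x = 0 ∨ j = 0 := by
    apply hP
    intro y α β
    rw [G.assoc]
    exact key x α (G.tp y β j) (hJ y β j hjJ)
  rcases hx0 with h' | h'
  · exact hx h'
  · exact hj0 h'
end

section
/- Let M be a prime Γ-ring and J a nonzero left ideal of M. If J is commutative (xαy = yαx for all x,y ∈ J, α ∈ Γ), then M is commutative. -/
/-!
Elements of a nonzero left ideal `J` of a prime Γ-ring are cancellable on the right: if `aγj = bγj`
for all `j ∈ J` and `γ`, then `a = b`, since `(a - b)δmγk = (a - b)δ(mγk) = 0` for a fixed `k ≠ 0`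
in `J`. Using assumption (A) and the commutativity of `J`, one checks that `jαm` and `mαj` agree
against `J` for `j ∈ J`, so `J` is central; with `J` central, `xαy` and `yαx` agree against `J`.
-/

namespace GammaRing

variable {M Γ : Type*} [AddCommGroup M] [AddCommGroup Γ] (G : GammaRing M Γ)

theorem tp_sub_left (a b : M) (α : Γ) (c : M) :
    G.tp (a - b) α c = G.tp a α c - G.tp b α c :=
  map_sub (AddMonoidHom.mk' (fun x => G.tp x α c) fun x y => G.add_left x y α c) a b

theorem eq_of_forall_tp_mem_eq (hP : G.IsPrime) {J : AddSubgroup M} (hJ : G.IsLeftIdeal J)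
    (hJ0 : J ≠ ⊥) {a b : M} (h : ∀ j ∈ J, ∀ γ : Γ, G.tp a γ j = G.tp b γ j) : a = b := by
  obtain ⟨k, hkJ, hk0⟩ := J.bot_or_exists_ne_zero.resolve_left hJ0
  have hzero : ∀ (m : M) (δ γ : Γ), G.tp (G.tp (a - b) δ m) γ k = 0 := fun m δ γ => by
    rw [G.assoc, tp_sub_left, h _ (hJ m γ k hkJ), sub_self]
  rcases hP _ _ hzero with hab | hk
  · exact sub_eq_zero.mp hab
  · exact absurd hk hk0

theorem isCommutative_of_coe_subset_center (hA : G.AssumptionA) (hP : G.IsPrime)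
    {J : AddSubgroup M} (hJ : G.IsLeftIdeal J) (hJ0 : J ≠ ⊥) (hZ : (J : Set M) ⊆ G.center) :
    G.IsCommutative := by
  intro x α y
  refine G.eq_of_forall_tp_mem_eq hP hJ hJ0 fun j hj γ => ?_
  calc G.tp (G.tp x α y) γ j = G.tp x α (G.tp y γ j) := G.assoc ..
    _ = G.tp (G.tp y γ j) α x := (hZ (hJ y γ j hj) α x).symm
    _ = G.tp y γ (G.tp j α x) := G.assoc ..
    _ = G.tp y γ (G.tp x α j) := by rw [hZ hj α x]
    _ = G.tp (G.tp y γ x) α j := (G.assoc ..).symm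
    _ = G.tp (G.tp y α x) γ j := hA ..

section CommutativeLeftIdeal

variable {G} (hA : G.AssumptionA) {J : AddSubgroup M} (hJ : G.IsLeftIdeal J)
  (hJcomm : ∀ x ∈ J, ∀ y ∈ J, ∀ α : Γ, G.tp x α y = G.tp y α x)
include hA hJ hJcomm

theorem tp_tp_mem_comm {j k : M} (hj : j ∈ J) (hk : k ∈ J) (m : M) (α β : Γ) :
    G.tp (G.tp j α m) β k = G.tp (G.tp m α j) β k :=
  calc G.tp (G.tp j α m) β k = G.tp j α (G.tp m β k) := G.assoc ..
    _ = G.tp (G.tp m β k) α j := hJcomm _ hj _ (hJ m β k hk) α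
    _ = G.tp m β (G.tp k α j) := G.assoc ..
    _ = G.tp m β (G.tp j α k) := by rw [hJcomm _ hk _ hj α]
    _ = G.tp (G.tp m β j) α k := (G.assoc ..).symm
    _ = G.tp (G.tp m α j) β k := hA ..

theorem coe_subset_center (hP : G.IsPrime) (hJ0 : J ≠ ⊥) : (J : Set M) ⊆ G.center := by
  intro j hj α m
  refine G.eq_of_forall_tp_mem_eq hP hJ hJ0 fun q hq δ => ?_
  calc G.tp (G.tp j α m) δ q = G.tp j α (G.tp m δ q) := G.assoc ..
    _ = G.tp (G.tp m δ q) α j := hJcomm _ hj _ (hJ m δ q hq) α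
    _ = G.tp (G.tp q δ m) α j := (tp_tp_mem_comm hA hJ hJcomm hq hj m δ α).symm
    _ = G.tp q δ (G.tp m α j) := G.assoc ..
    _ = G.tp (G.tp m α j) δ q := hJcomm _ hq _ (hJ m α j hj) δ

end CommutativeLeftIdeal

end GammaRing

theorem stmt_5 {M Γ : Type*} [AddCommGroup M] [AddCommGroup Γ] (G : GammaRing M Γ)
    (hA : G.AssumptionA) (hP : G.IsPrime) (J : AddSubgroup M)
    (hJ : G.IsLeftIdeal J) (hJ0 : J ≠ ⊥)
    (hJcomm : ∀ x ∈ J, ∀ y ∈ J, ∀ α : Γ, G.tp x α y = G.tp y α x) :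
    G.IsCommutative :=
  G.isCommutative_of_coe_subset_center hA hP hJ hJ0
    (GammaRing.coe_subset_center hA hJ hJcomm hP hJ0)
end

section
/- Let M be a prime Γ-ring satisfying assumption (A) and D: M → M a derivation. If a ∈ M satisfies aαD(x) = 0 for all x ∈ M and α ∈ Γ, then a = 0 or D = 0. -/
theorem stmt_6 {M Γ : Type*} [AddCommGroup M] [AddCommGroup Γ] (G : GammaRing M Γ)
    (hA : G.AssumptionA) (hP : G.IsPrime) (D : M → M) (hD : G.IsDerivation D)
    (a : M) (h : ∀ (x : M) (α : Γ), G.tp a α (D x) = 0) :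
    a = 0 ∨ ∀ x : M, D x = 0 := by
  by_cases ha : a = 0
  · exact Or.inl ha
  · right
    intro y
    have main : ∀ (x : M) (α β : Γ), G.tp (G.tp a α x) β (D y) = 0 := by
      intro x α β
      have key : G.tp a α (D (G.tp x β y)) = 0 := h _ _
      rw [hD.2] at key
      rw [G.add_right] at key
      have h1 : G.tp a α (G.tp (D x) β y) = 0 := by
        rw [← G.assoc, h x α]
        have := G.add_left 0 0 β y
        simpa using this
      rw [h1, zero_add] at key
      rw [G.assoc]
      exact key
    rcases hP a (D y) main with h0 | h0
    · exact absurd h0 ha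
    · exact h0
end

section
/- Let M be a prime Γ-ring satisfying assumption (A) and J a nonzero left ideal of M. If D is a derivation on M that vanishes on J, then D is zero on all of M. -/
theorem stmt_7 {M Γ : Type*} [AddCommGroup M] [AddCommGroup Γ] (G : GammaRing M Γ)
    (hA : G.AssumptionA) (hP : G.IsPrime) (J : AddSubgroup M)
    (hJ : G.IsLeftIdeal J) (hJ0 : J ≠ ⊥) (D : M → M) (hD : G.IsDerivation D)
    (h : ∀ j ∈ J, D j = 0) :
    ∀ x : M, D x = 0 := by
  intro x
  have tp0 : ∀ (m : M) (α : Γ), G.tp m α 0 = 0 := by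
    intro m α
    have := G.add_right m α 0 0
    rw [add_zero] at this
    exact (left_eq_add.mp this)
  have key : ∀ (α : Γ) (k : M), k ∈ J → G.tp (D x) α k = 0 := by
    intro α k hk
    have h1 : D (G.tp x α k) = 0 := h _ (hJ x α k hk)
    have h2 := hD.2 x α k
    rw [h k hk, tp0, add_zero, h1] at h2
    exact h2.symm
  obtain ⟨j, hjJ, hj0⟩ : ∃ j ∈ J, j ≠ 0 := by
    by_contra hc
    push_neg at hc
    exact hJ0 (AddSubgroup.ext fun y => ⟨fun hy => hc y hy, fun hy => by
      subst hy; exact J.zero_mem⟩)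
  rcases hP (D x) j (fun m α β => by
    rw [G.assoc]
    exact key α (G.tp m β j) (hJ m β j hjJ)) with h' | h'
  · exact h'
  · exact absurd h' hj0
end

section
/- Let M be a prime Γ-ring satisfying assumption (A), J a left ideal with J ∩ Z(M) ≠ 0, and f a generalized derivation on M with associated nonzero derivation D such that f is centralizing and commuting on J. Then M is commutative. -/
namespace MyAux
open GammaRing
variable {M Γ : Type*} [AddCommGroup M] [AddCommGroup Γ] (G : GammaRing M Γ)

def tpR (x : M) (α : Γ) : M →+ M := AddMonoidHom.mk' (fun y => G.tp x α y) (G.add_right x α)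
def tpL (α : Γ) (y : M) : M →+ M := AddMonoidHom.mk' (fun x => G.tp x α y) (fun a b => G.add_left a b α y)

lemma tp_zero_right (x : M) (α : Γ) : G.tp x α 0 = 0 := (tpR G x α).map_zero
lemma tp_zero_left (α : Γ) (y : M) : G.tp 0 α y = 0 := (tpL G α y).map_zero
lemma tp_sub_right (x : M) (α : Γ) (y z : M) : G.tp x α (y - z) = G.tp x α y - G.tp x α z :=
  (tpR G x α).map_sub y z
lemma tp_sub_left (x y : M) (α : Γ) (z : M) : G.tp (x - y) α z = G.tp x α z - G.tp y α z :=
  (tpL G α z).map_sub x y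
lemma tp_neg_right (x : M) (α : Γ) (y : M) : G.tp x α (-y) = -G.tp x α y :=
  (tpR G x α).map_neg y

lemma comm_self (a : M) (α : Γ) : G.comm a α a = 0 := sub_self _
lemma comm_swap (x : M) (α : Γ) (y : M) : G.comm x α y = -G.comm y α x := by
  simp [GammaRing.comm]
lemma comm_add_left (x y : M) (α : Γ) (z : M) :
    G.comm (x + y) α z = G.comm x α z + G.comm y α z := by
  simp only [GammaRing.comm, G.add_left, G.add_right]; abel
lemma comm_add_right (x : M) (α : Γ) (y z : M) :
    G.comm x α (y + z) = G.comm x α y + G.comm x α z := by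
  simp only [GammaRing.comm, G.add_left, G.add_right]; abel

lemma comm_central (z : M) (hz : z ∈ G.center) (α : Γ) (u : M) : G.comm u α z = 0 := by
  simp [GammaRing.comm, hz α u]

lemma comm_tp_right (hA : G.AssumptionA) (u x y : M) (α γ : Γ) :
    G.comm u α (G.tp x γ y) = G.tp (G.comm u α x) γ y + G.tp x γ (G.comm u α y) := by
  simp only [GammaRing.comm, tp_sub_left, tp_sub_right]
  rw [← G.assoc u α x γ y, G.assoc x γ y α u, ← G.assoc x γ u α y, hA x u y γ α]
  abel

lemma comm_tp_left (hA : G.AssumptionA) (x y u : M) (α γ : Γ) :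
    G.comm (G.tp x γ y) α u = G.tp (G.comm x α u) γ y + G.tp x γ (G.comm y α u) := by
  simp only [GammaRing.comm, tp_sub_left, tp_sub_right]
  rw [G.assoc x γ y α u, ← G.assoc u α x γ y, ← G.assoc x γ u α y, hA x u y γ α]
  abel

lemma comm_central_tp (hA : G.AssumptionA) (z : M) (hz : z ∈ G.center) (x a : M) (α β : Γ) :
    G.comm (G.tp z β x) α a = G.tp z α (G.comm x β a) := by
  simp only [GammaRing.comm, tp_sub_right]
  rw [hA z x a β α, G.assoc z α x β a, ← G.assoc a α z β x, ← hz α a, G.assoc z α a β x]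

lemma comm_tp_central (hA : G.AssumptionA) (z : M) (hz : z ∈ G.center) (u x : M) (α β : Γ) :
    G.comm u α (G.tp z β x) = G.tp z α (G.comm u β x) := by
  rw [comm_swap, comm_central_tp G hA z hz, comm_swap G x β u, tp_neg_right, neg_neg]

lemma prime_central (hP : G.IsPrime) (c : M) (hc : c ∈ G.center) (hc0 : c ≠ 0) (t : M)
    (h : ∀ α : Γ, G.tp c α t = 0) : t = 0 := by
  rcases hP c t (fun m α β => by rw [hc α m, G.assoc, h β, tp_zero_right]) with h' | h'
  · exact absurd h' hc0
  · exact h'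

lemma prime_central' (hP : G.IsPrime) (c : M) (hc0 : c ≠ 0) (t : M)
    (h : ∀ (m : M) (γ δ : Γ), G.tp t γ (G.tp m δ c) = 0) : t = 0 := by
  rcases hP t c (fun m γ δ => by rw [G.assoc]; exact h m γ δ) with h' | h'
  · exact h'
  · exact absurd h' hc0

end MyAux


theorem stmt_10 {M Γ : Type*} [AddCommGroup M] [AddCommGroup Γ] (G : GammaRing M Γ)
    (hA : G.AssumptionA) (hP : G.IsPrime) (J : AddSubgroup M) (hJ : G.IsLeftIdeal J)
    (hJZ : ∃ c : M, c ∈ J ∧ c ∈ G.center ∧ c ≠ 0)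
    (D : M → M) (hD : G.IsDerivation D) (hD0 : ∃ x : M, D x ≠ 0)
    (f : M → M) (hf : G.IsGenDerivation f D)
    (hcent : G.CentralizingOn f J) (hcomm : G.CommutingOn f J) :
    G.IsCommutative := by

  obtain ⟨c, hcJ, hcZ, hc0⟩ := hJZ
  obtain ⟨Dadd, Dmul⟩ := hD
  obtain ⟨fadd, fmul⟩ := hf
  have hJm : ∀ (m : M) (δ : Γ), G.tp m δ c ∈ J := fun m δ => hJ m δ c hcJ
  -- Step A: linearized commuting condition
  have stepA : ∀ a ∈ J, ∀ b ∈ J, ∀ α : Γ,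
      G.comm (f a) α b + G.comm (f b) α a = 0 := by
    intro a ha b hb α
    have h := hcomm (a + b) (J.add_mem ha hb) α
    rw [fadd] at h
    simp only [MyAux.comm_add_left, MyAux.comm_add_right, hcomm a ha α, hcomm b hb α,
      zero_add, add_zero] at h
    rw [add_comm]
    exact h
  -- Step B: [f c, a] = 0 for a in J
  have hfcJ : ∀ a ∈ J, ∀ α : Γ, G.comm (f c) α a = 0 := by
    intro a ha α
    have h := stepA a ha c hcJ α
    rwa [MyAux.comm_central G c hcZ, zero_add] at h
  -- Step C: f c is central
  have hfcZ : f c ∈ G.center := by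
    intro α x
    have key : ∀ γ : Γ, ∀ j ∈ J, G.tp (G.comm (f c) α x) γ j = 0 := by
      intro γ j hj
      have h := hfcJ (G.tp x γ j) (hJ x γ j hj) α
      rwa [MyAux.comm_tp_right G hA, hfcJ j hj α, MyAux.tp_zero_right, add_zero] at h
    have h0 := MyAux.prime_central' G hP c hc0 _
      (fun m γ δ => key γ _ (hJm m δ))
    exact sub_eq_zero.mp h0
  -- Step D: the key equation
  have stepE : ∀ a ∈ J, ∀ (x : M) (β α : Γ),
      G.tp c α (G.comm (f a) β x) + G.tp (f c) α (G.comm x β a)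
        + G.tp c α (G.comm (D x) β a) = 0 := by
    intro a ha x β α
    have hb : G.tp c β x ∈ J := by
      have : G.tp c β x = G.tp x β c := hcZ β x
      rw [this]; exact hJ x β c hcJ
    have h := stepA a ha _ hb α
    rw [MyAux.comm_tp_central G hA c hcZ (f a) x α β, fmul c β x,
      MyAux.comm_add_left, MyAux.comm_central_tp G hA (f c) hfcZ x a α β,
      MyAux.comm_central_tp G hA c hcZ (D x) a α β, ← add_assoc] at h
    exact h
  -- Step E: [D a, a] = 0 for a in J
  have hDa : ∀ a ∈ J, ∀ β : Γ, G.comm (D a) β a = 0 := by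
    intro a ha β
    apply MyAux.prime_central G hP c hcZ hc0
    intro α
    have h := stepE a ha a β α
    rwa [hcomm a ha β, MyAux.comm_self, MyAux.tp_zero_right, MyAux.tp_zero_right,
      add_zero, zero_add] at h
  -- Step F: [x,a] γ (D a) = 0
  have hF : ∀ a ∈ J, ∀ (x : M) (β γ : Γ), G.tp (G.comm x β a) γ (D a) = 0 := by
    intro a ha x β γ
    apply MyAux.prime_central G hP c hcZ hc0
    intro α
    have h := stepE a ha (G.tp x γ a) β α
    rw [MyAux.comm_tp_right G hA (f a) x a β γ, hcomm a ha β,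
      MyAux.comm_tp_left G hA x a a β γ, MyAux.comm_self,
      Dmul x γ a, MyAux.comm_add_left,
      MyAux.comm_tp_left G hA (D x) a a β γ, MyAux.comm_self,
      MyAux.comm_tp_left G hA x (D a) a β γ, hDa a ha β] at h
    simp only [MyAux.tp_zero_right, add_zero] at h
    rw [G.add_right, ← G.assoc c α (G.comm (f a) β x) γ a,
      ← G.assoc (f c) α (G.comm x β a) γ a,
      ← G.assoc c α (G.comm (D x) β a) γ a, ← add_assoc,
      ← G.add_left, ← G.add_left, stepE a ha x β α, MyAux.tp_zero_left, zero_add] at h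
    exact h
  -- Step G: dichotomy
  have hDich : ∀ a ∈ J, (∀ (x : M) (β : Γ), G.comm x β a = 0) ∨ D a = 0 := by
    intro a ha
    by_cases hda : D a = 0
    · exact Or.inr hda
    · left
      intro x β
      have key : ∀ (y : M) (δ γ : Γ), G.tp (G.tp (G.comm x β a) δ y) γ (D a) = 0 := by
        intro y δ γ
        have h := hF a ha (G.tp x δ y) β γ
        rw [MyAux.comm_tp_left G hA x y a β δ, G.add_left, G.assoc x δ (G.comm y β a) γ (D a),
          hF a ha y β γ, MyAux.tp_zero_right, add_zero] at h
        exact h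
      rcases hP (G.comm x β a) (D a) key with h | h
      · exact h
      · exact absurd h hda
  -- Step H: Brauer-type argument
  by_cases hDJ : ∀ a ∈ J, D a = 0
  · exfalso
    obtain ⟨x0, hx0⟩ := hD0
    apply hx0
    have hz : ∀ (x : M) (γ : Γ), ∀ a ∈ J, G.tp (D x) γ a = 0 := by
      intro x γ a ha
      have h := hDJ (G.tp x γ a) (hJ x γ a ha)
      rwa [Dmul, hDJ a ha, MyAux.tp_zero_right, add_zero] at h
    exact MyAux.prime_central' G hP c hc0 (D x0) (fun m γ δ => hz x0 γ _ (hJm m δ))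
  · push_neg at hDJ
    obtain ⟨a0, ha0J, ha0D⟩ := hDJ
    have hJZ' : ∀ a ∈ J, ∀ (x : M) (β : Γ), G.comm x β a = 0 := by
      intro a ha
      rcases hDich a ha with h | hda
      · exact h
      · have h0 : ∀ (x : M) (β : Γ), G.comm x β a0 = 0 :=
          (hDich a0 ha0J).resolve_right ha0D
        have h1 : ∀ (x : M) (β : Γ), G.comm x β (a + a0) = 0 := by
          rcases hDich (a + a0) (J.add_mem ha ha0J) with h | h
          · exact h
          · exfalso; apply ha0D; rwa [Dadd, hda, zero_add] at h
        intro x β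
        have h2 := h1 x β
        rwa [MyAux.comm_add_right, h0 x β, add_zero] at h2
    intro x α y
    have key : ∀ (γ : Γ), ∀ j ∈ J, G.tp (G.comm x α y) γ j = 0 := by
      intro γ j hj
      have hjc : ∀ (w : M) (δ : Γ), G.tp w δ j = G.tp j δ w :=
        fun w δ => sub_eq_zero.mp (hJZ' j hj w δ)
      have hxj : G.tp y α (G.tp x γ j) = G.tp (G.tp x γ j) α y :=
        sub_eq_zero.mp (hJZ' _ (hJ x γ j hj) y α)
      show G.tp (G.tp x α y - G.tp y α x) γ j = 0
      rw [MyAux.tp_sub_left, sub_eq_zero, G.assoc y α x γ j, hxj, hA x j y γ α,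
        hjc x α, hA j x y α γ, G.assoc j γ x α y, ← hjc (G.tp x α y) γ]
    have h0 := MyAux.prime_central' G hP c hc0 _ (fun m γ δ => key γ _ (hJm m δ))
    exact sub_eq_zero.mp h0
end

section
/- Let M be a prime Γ-ring satisfying assumption (A), D a nonzero derivation on M, and J a nonzero left ideal. If for every a ∈ J either a ∈ Z(M) or D(a) = 0, then J ⊆ Z(M). -/
theorem stmt_11 {M Γ : Type*} [AddCommGroup M] [AddCommGroup Γ] (G : GammaRing M Γ)
    (hA : G.AssumptionA) (hP : G.IsPrime) (D : M → M) (hD : G.IsDerivation D)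
    (hD0 : ∃ x : M, D x ≠ 0) (J : AddSubgroup M) (hJ : G.IsLeftIdeal J) (hJ0 : J ≠ ⊥)
    (h : ∀ a ∈ J, a ∈ G.center ∨ D a = 0) :
    ∀ a ∈ J, a ∈ G.center := by
  obtain ⟨hDadd, hDlei⟩ := hD
  -- basic lemmas
  have tl0 : ∀ (α : Γ) (y : M), G.tp 0 α y = 0 := by
    intro α y
    have := G.add_left 0 0 α y
    rw [add_zero] at this
    simpa using this
  have subl : ∀ (x y : M) (α : Γ) (z : M),
      G.tp (x - y) α z = G.tp x α z - G.tp y α z := by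
    intro x y α z
    have := G.add_left (x - y) y α z
    rw [sub_add_cancel] at this
    exact eq_sub_of_add_eq this.symm
  have subr : ∀ (x : M) (α : Γ) (y z : M),
      G.tp x α (y - z) = G.tp x α y - G.tp x α z := by
    intro x α y z
    have := G.add_right x α (y - z) z
    rw [sub_add_cancel] at this
    exact eq_sub_of_add_eq this.symm
  have hD0' : D 0 = 0 := by
    have := hDadd 0 0
    rw [add_zero] at this
    exact (add_eq_left.mp this.symm)
  -- center closed under subtraction
  have hZsub : ∀ z1 z2 : M, z1 ∈ G.center → z2 ∈ G.center → z1 - z2 ∈ G.center := by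
    intro z1 z2 h1 h2 α y
    rw [subl, subr, h1, h2]
  by_contra hcon
  push_neg at hcon
  obtain ⟨a, haJ, haZ⟩ := hcon
  have haD : D a = 0 := (h a haJ).resolve_left haZ
  -- every element of J is killed by D
  have hDJ : ∀ b ∈ J, D b = 0 := by
    intro b hbJ
    by_contra hbD
    have hbZ : b ∈ G.center := (h b hbJ).resolve_right hbD
    have habJ : a + b ∈ J := J.add_mem haJ hbJ
    rcases h (a + b) habJ with hZ | hE
    · exact haZ (by
        have := hZsub (a + b) b hZ hbZ
        simpa using this)
    · rw [hDadd, haD, zero_add] at hE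
      exact hbD hE
  -- D kills G.tp m α j for j ∈ J in the left factor
  have key : ∀ (m : M) (α : Γ) (j : M), j ∈ J → G.tp (D m) α j = 0 := by
    intro m α j hj
    have h1 : D (G.tp m α j) = 0 := hDJ _ (hJ m α j hj)
    rw [hDlei, hDJ j hj] at h1
    have h0 : G.tp m α 0 = 0 := by
      have := G.add_right m α 0 0
      rw [add_zero] at this
      simpa using this
    rw [h0, add_zero] at h1
    exact h1
  -- get a nonzero element of J
  obtain ⟨j, hjJ, hjne⟩ : ∃ j ∈ J, j ≠ 0 := by
    by_contra hc
    push_neg at hc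
    exact hJ0 (by
      ext x
      simp only [AddSubgroup.mem_bot]
      exact ⟨fun hx => hc x hx, fun hx => hx ▸ J.zero_mem⟩)
  obtain ⟨m, hm⟩ := hD0
  have : ∀ (x : M) (α β : Γ), G.tp (G.tp (D m) α x) β j = 0 := by
    intro x α β
    rw [G.assoc]
    exact key m α _ (hJ x β j hjJ)
  rcases hP (D m) j this with h1 | h1
  · exact hm h1
  · exact hjne h1
end
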